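/- arXiv:1507.07231 — 2 statements merged into one kernel-verified Lean document; each statement's English description precedes it below -/
import Mathlib

section
/- For every integer n ≥ 1 and every n-element subset I₀ of ℤ/2n, there exists a balanced bijection e from I₀ onto its complement (ℤ/2n) \ I₀. (This is the full combinatorial content of the paper's Lemma 3, 'every set of n indices is the index of some tubed Heegaard surface': the balanced condition expresses that each annulus, drawn from its left foot to its right foot in the positive cyclic direction, passes over complete shorter annuli only, so that the n annuli can be realized pairwise disjointly, attached in order of increasing length.) -/
/-!
Weight the elements of `I₀` by `+1` and the others by `-1`, so that the total weight is `0`.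
Reading `I₀` as opening and its complement as closing brackets around the circle, match
`i ∈ I₀` with the first point `i + d` at which the partial sums of the weights taken after `i`
reach `-1`. Up to that point they stay `≥ 0`, and they vanish at `d - 1`: the points strictly
between are balanced. Two matched arcs never share their right end: if `j` lies strictly inside
the arc of `i`, the partial sum from `i` is `≥ 1` once it has passed `j`, so it cannot drop to
`-1` exactly where the walk from `j` does. Hence the matching is injective, and bijective since
both sides have `n` elements.
-/

/-- A bijection-candidate `e` from the index set `I₀ ⊆ ℤ/2n` to its complement is
*balanced* if for every `i ∈ I₀`, among the elements `x` of `ℤ/2n` lying strictly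
between `i` and `e i` in the positive cyclic order (those `x` with
`0 < (x - i).val < (e i - i).val`), exactly as many belong to `I₀` as belong to
the complement `(ℤ/2n) \ I₀`. -/
def IsBalanced (n : ℕ) [NeZero (2 * n)] (I₀ : Finset (ZMod (2 * n)))
    (e : {i : ZMod (2 * n) // i ∈ I₀} → {x : ZMod (2 * n) // x ∉ I₀}) : Prop :=
  ∀ i : {i : ZMod (2 * n) // i ∈ I₀},
    (Finset.univ.filter fun x : ZMod (2 * n) =>
        0 < (x - (i : ZMod (2 * n))).val ∧
        (x - (i : ZMod (2 * n))).val <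
          ((e i : ZMod (2 * n)) - (i : ZMod (2 * n))).val ∧ x ∈ I₀).card =
    (Finset.univ.filter fun x : ZMod (2 * n) =>
        0 < (x - (i : ZMod (2 * n))).val ∧
        (x - (i : ZMod (2 * n))).val <
          ((e i : ZMod (2 * n)) - (i : ZMod (2 * n))).val ∧ x ∉ I₀).card

open Finset

namespace BalancedMatching

section Walk

variable {N : ℕ} (I : Finset (ZMod N))

def weight (x : ZMod N) : ℤ := if x ∈ I then 1 else -1

def walk (i : ZMod N) (d : ℕ) : ℤ := ∑ k ∈ range d, weight I (i + ((k + 1 : ℕ) : ZMod N))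

noncomputable def matchDist (i : ZMod N) : ℕ := sInf {d | walk I i d = -1}

lemma weight_eq_one_or_neg_one (x : ZMod N) : weight I x = 1 ∨ weight I x = -1 := by
  unfold weight; split_ifs <;> simp

lemma sum_weight (s : Finset (ZMod N)) :
    ∑ x ∈ s, weight I x = #(s.filter (· ∈ I)) - #(s.filter (· ∉ I)) := by
  simp [weight, sum_ite, sub_eq_add_neg]

@[simp]
lemma walk_zero (i : ZMod N) : walk I i 0 = 0 := by simp [walk]

lemma walk_succ (i : ZMod N) (d : ℕ) :
    walk I i (d + 1) = walk I i d + weight I (i + ((d + 1 : ℕ) : ZMod N)) :=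
  sum_range_succ _ _

lemma walk_add (i : ZMod N) (a b : ℕ) :
    walk I i (a + b) = walk I i a + walk I (i + a) b := by
  simp only [walk, sum_range_add]
  congr 1
  refine sum_congr rfl fun k _ => congrArg (weight I) ?_
  push_cast
  ring

lemma walk_nonneg_of_lt_matchDist {i : ZMod N} {d : ℕ} (hd : d < matchDist I i) :
    0 ≤ walk I i d := by
  induction d with
  | zero => simp
  | succ d ih =>
    have hne : walk I i (d + 1) ≠ -1 := Nat.notMem_of_lt_sInf hd
    have hprev := ih (by omega)
    rw [walk_succ] at hne ⊢
    rcases weight_eq_one_or_neg_one I (i + ((d + 1 : ℕ) : ZMod N)) with h | h <;>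
      rw [h] at hne ⊢ <;> omega

end Walk

variable {N : ℕ} [NeZero N] (I : Finset (ZMod N))

def between (i : ZMod N) (d : ℕ) : Finset (ZMod N) :=
  univ.filter fun x => 0 < (x - i).val ∧ (x - i).val < d

lemma walk_eq_sum_between (i : ZMod N) {d : ℕ} (hd : d < N) :
    walk I i d = ∑ x ∈ between i (d + 1), weight I x := by
  refine sum_nbij' (fun k => i + ((k + 1 : ℕ) : ZMod N)) (fun x => (x - i).val - 1)
    (fun k hk => ?_) (fun x hx => ?_) (fun k hk => ?_) (fun x hx => ?_) fun _ _ => rfl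
  · simp only [mem_range] at hk
    simp only [between, mem_filter, mem_univ, true_and, add_sub_cancel_left,
      ZMod.val_cast_of_lt (show k + 1 < N by omega)]
    omega
  · simp only [between, mem_filter, mem_univ, true_and] at hx
    simp only [mem_range]
    omega
  · simp only [mem_range] at hk
    simp only [add_sub_cancel_left, ZMod.val_cast_of_lt (show k + 1 < N by omega)]
    rfl
  · simp only [between, mem_filter, mem_univ, true_and] at hx
    simp only [Nat.sub_add_cancel hx.1, ZMod.natCast_zmod_val, add_sub_cancel]

lemma between_eq_erase (i : ZMod N) : between i N = univ.erase i := by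
  ext x
  simp [between, ZMod.val_pos, ZMod.val_lt, sub_eq_zero]

lemma sum_weight_univ (hI : 2 * #I = N) : ∑ x, weight I x = 0 := by
  have hsplit := card_filter_add_card_filter_not (s := univ) (· ∈ I)
  simp only [filter_univ_mem, card_univ, ZMod.card] at hsplit
  rw [sum_weight, filter_univ_mem]
  omega

lemma walk_sub_one_of_mem (hI : 2 * #I = N) {i : ZMod N} (hi : i ∈ I) :
    walk I i (N - 1) = -1 := by
  have hN := NeZero.one_le (n := N)
  rw [walk_eq_sum_between I i (by omega), Nat.sub_add_cancel hN, between_eq_erase,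
    sum_erase_eq_sub (mem_univ i), sum_weight_univ I hI, weight, if_pos hi, zero_sub]

lemma walk_matchDist (hI : 2 * #I = N) {i : ZMod N} (hi : i ∈ I) :
    walk I i (matchDist I i) = -1 :=
  Nat.sInf_mem (s := {d | walk I i d = -1}) ⟨N - 1, walk_sub_one_of_mem I hI hi⟩

lemma matchDist_pos (hI : 2 * #I = N) {i : ZMod N} (hi : i ∈ I) : 0 < matchDist I i := by
  by_contra! h
  have hwalk := walk_matchDist I hI hi
  simp_all

lemma matchDist_lt (hI : 2 * #I = N) {i : ZMod N} (hi : i ∈ I) : matchDist I i < N :=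
  (Nat.sInf_le (walk_sub_one_of_mem I hI hi)).trans_lt (Nat.sub_lt NeZero.one_le one_pos)

lemma walk_pred_matchDist (hI : 2 * #I = N) {i : ZMod N} (hi : i ∈ I) :
    walk I i (matchDist I i - 1) = 0 ∧ weight I (i + (matchDist I i : ZMod N)) = -1 := by
  have hpos := matchDist_pos I hI hi
  have hstep := walk_succ I i (matchDist I i - 1)
  rw [Nat.sub_add_cancel hpos, walk_matchDist I hI hi] at hstep
  have hprev := walk_nonneg_of_lt_matchDist I (i := i) (d := matchDist I i - 1) (by omega)
  rcases weight_eq_one_or_neg_one I (i + (matchDist I i : ZMod N)) with h | h <;>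
    rw [h] at hstep ⊢ <;> omega

lemma add_matchDist_notMem (hI : 2 * #I = N) {i : ZMod N} (hi : i ∈ I) :
    i + (matchDist I i : ZMod N) ∉ I := by
  intro h
  have hweight := (walk_pred_matchDist I hI hi).2
  simp [weight, h] at hweight

lemma matchDist_ne_add_matchDist (hI : 2 * #I = N) {i j : ZMod N} (hi : i ∈ I) (hj : j ∈ I)
    {m : ℕ} (hm : 0 < m) (hij : j = i + m) : m + matchDist I j ≠ matchDist I i := by
  intro h
  have hsplit := walk_add I i m (matchDist I j)
  rw [h, ← hij, walk_matchDist I hI hi, walk_matchDist I hI hj] at hsplit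
  have hstep := walk_succ I i (m - 1)
  rw [Nat.sub_add_cancel hm, ← hij, weight, if_pos hj] at hstep
  have hprev := walk_nonneg_of_lt_matchDist I (i := i) (d := m - 1) (by omega)
  omega

lemma eq_of_add_matchDist_eq (hI : 2 * #I = N) {i j : ZMod N} (hi : i ∈ I) (hj : j ∈ I)
    (h : i + (matchDist I i : ZMod N) = j + matchDist I j) : i = j := by
  wlog hle : matchDist I j ≤ matchDist I i generalizing i j
  · exact (this hj hi h.symm (by omega)).symm
  obtain hlt | heq := hle.lt_or_eq
  · refine absurd (Nat.sub_add_cancel hle) (matchDist_ne_add_matchDist I hI hi hj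
      (m := matchDist I i - matchDist I j) (by omega) ?_)
    rw [Nat.cast_sub hle]
    linear_combination -h
  · rw [heq] at h
    exact add_right_cancel h

lemma card_filter_mem_between_matchDist (hI : 2 * #I = N) {i : ZMod N} (hi : i ∈ I) :
    #((between i (matchDist I i)).filter (· ∈ I)) =
      #((between i (matchDist I i)).filter (· ∉ I)) := by
  have h := walk_eq_sum_between I i (d := matchDist I i - 1)
    (by have hlt := matchDist_lt I hI hi; omega)
  rw [(walk_pred_matchDist I hI hi).1, Nat.sub_add_cancel (matchDist_pos I hI hi),
    sum_weight] at h
  omega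

end BalancedMatching

open BalancedMatching in
theorem exists_balanced_bijection_general (n : ℕ) [NeZero (2 * n)]
    (I₀ : Finset (ZMod (2 * n))) (hI : I₀.card = n) :
    ∃ e : {i : ZMod (2 * n) // i ∈ I₀} → {x : ZMod (2 * n) // x ∉ I₀},
      Function.Bijective e ∧ IsBalanced n I₀ e := by
  have hI' : 2 * #I₀ = 2 * n := by rw [hI]
  refine ⟨fun i => ⟨i + matchDist I₀ i, add_matchDist_notMem I₀ hI' i.2⟩, ?_, fun i => ?_⟩
  · rw [Fintype.bijective_iff_injective_and_card, Fintype.card_subtype_compl,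
      Fintype.card_coe, ZMod.card]
    refine ⟨fun i j h => Subtype.ext ?_, by omega⟩
    exact eq_of_add_matchDist_eq I₀ hI' i.2 j.2 (congrArg Subtype.val h)
  · simp only [add_sub_cancel_left, ZMod.val_cast_of_lt (matchDist_lt I₀ hI' i.2)]
    simpa only [between, filter_filter, and_assoc] using
      card_filter_mem_between_matchDist I₀ hI' i.2

/-- For every integer `n ≥ 1` and every `n`-element subset `I₀` of
`ℤ/2n`, there exists a balanced bijection `e` from `I₀` onto its complement
`(ℤ/2n) \ I₀`. -/
theorem exists_balanced_bijection (n : ℕ) (hn : 1 ≤ n) [NeZero (2 * n)]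
    (I₀ : Finset (ZMod (2 * n))) (hI : I₀.card = n) :
    ∃ e : {i : ZMod (2 * n) // i ∈ I₀} → {x : ZMod (2 * n) // x ∉ I₀},
      Function.Bijective e ∧ IsBalanced n I₀ e :=
  exists_balanced_bijection_general n I₀ hI
end

section
/- Let n ≥ 1 be an integer and I₀ an n-element subset of ℤ/2n. Define finite subsets T_k and J_k of ℤ/2n recursively by T₀ = I₀ and, for 1 ≤ k ≤ n, J_k = { i ∈ I₀ \ (J₁ ∪ ⋯ ∪ J_{k−1}) : i + (2k−1) ∉ T_{k−1} } and T_k = T_{k−1} ∪ { i + (2k−1) : i ∈ J_k }, where i + (2k−1) is computed in ℤ/2n. Then the sets J₁, …, J_n are pairwise disjoint with union equal to I₀, and the map φ : I₀ → ℤ/2n defined by φ(i) = i + (2k−1) for i ∈ J_k is injective with image exactly the complement (ℤ/2n) \ I₀. (This is the correctness of the greedy shortest-annulus-first construction in the proof of the paper's Lemma 3: attaching annuli in order of increasing odd length 2k−1, with J_k the set of left feet of the annuli of length 2k−1 and T_k the set of indices no longer available, produces a tubed Heegaard surface with index I₀.) -/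
/-!
If some `i ∈ I₀` were never chosen, then for every `k ≤ n` the point `i + (2k-1)` would already be
occupied at stage `k`, either by a point of `I₀` or by the right foot of an earlier annulus, whose
left foot lies in `I₀ \ {i}`. Assigning this foot to `k` is injective: equal annulus feet force
equal lengths because the `J_m` are disjoint, and a mixed coincidence would make one odd length the
sum of two odd lengths modulo the even number `2n`. This gives `n ≤ n - 1`. Hence the `J_k` exhaust
`I₀`; as every step adds one new right foot per left foot, `T_n` has `2n` points, and the right feet
are exactly the complement of `I₀`.
-/

/-- Greedy shortest-annulus-first recursion: `greedyTJ n I₀ k = (T_k, J₁ ∪ ⋯ ∪ J_k)`,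
where `T₀ = I₀`, and for `k ≥ 1`,
`J_k = { i ∈ I₀ \ (J₁ ∪ ⋯ ∪ J_{k-1}) : i + (2k-1) ∉ T_{k-1} }` and
`T_k = T_{k-1} ∪ { i + (2k-1) : i ∈ J_k }`, with `i + (2k-1)` computed in `ℤ/2n`. -/
def greedyTJ (n : ℕ) (I₀ : Finset (ZMod (2 * n))) :
    ℕ → Finset (ZMod (2 * n)) × Finset (ZMod (2 * n))
  | 0 => (I₀, ∅)
  | k + 1 =>
    let p := greedyTJ n I₀ k
    let J := (I₀ \ p.2).filter fun i =>
      i + ((2 * (k + 1) - 1 : ℕ) : ZMod (2 * n)) ∉ p.1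
    (p.1 ∪ J.image fun i => i + ((2 * (k + 1) - 1 : ℕ) : ZMod (2 * n)), p.2 ∪ J)

/-- The set `J_k` of left feet of the annuli of length `2k - 1` (for `k ≥ 1`):
`J_k = { i ∈ I₀ \ (J₁ ∪ ⋯ ∪ J_{k-1}) : i + (2k-1) ∉ T_{k-1} }`. -/
def greedyJ (n : ℕ) (I₀ : Finset (ZMod (2 * n))) (k : ℕ) : Finset (ZMod (2 * n)) :=
  (I₀ \ (greedyTJ n I₀ (k - 1)).2).filter fun i =>
    i + ((2 * k - 1 : ℕ) : ZMod (2 * n)) ∉ (greedyTJ n I₀ (k - 1)).1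

theorem ZMod.natCast_eq_natCast_iff_of_lt {a b c : ℕ} (ha : a < c) (hb : b < c) :
    (a : ZMod c) = b ↔ a = b := by
  rw [ZMod.natCast_eq_natCast_iff', Nat.mod_eq_of_lt ha, Nat.mod_eq_of_lt hb]

theorem ZMod.natCast_ne_add_of_odd {n a b c : ℕ} (ha : Odd a) (hb : Odd b) (hc : Odd c) :
    (a : ZMod (2 * n)) ≠ b + c := by
  intro h
  have h2 := congrArg (ZMod.castHom (dvd_mul_right 2 n) (ZMod 2)) h
  simp only [map_add, map_natCast, ha.natCast_zmod_two, hb.natCast_zmod_two,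
    hc.natCast_zmod_two] at h2
  exact absurd h2 (by decide)

open Finset

section Greedy

variable {n : ℕ} {I₀ : Finset (ZMod (2 * n))}

local notation "δ" k:max => ((2 * k - 1 : ℕ) : ZMod (2 * n))

theorem greedyTJ_succ (k : ℕ) :
    greedyTJ n I₀ (k + 1) =
      ((greedyTJ n I₀ k).1 ∪ (greedyJ n I₀ (k + 1)).image (fun i => i + δ (k + 1)),
        (greedyTJ n I₀ k).2 ∪ greedyJ n I₀ (k + 1)) := rfl

theorem mem_greedyJ {k : ℕ} {i : ZMod (2 * n)} :
    i ∈ greedyJ n I₀ k ↔ i ∈ I₀ ∧ i ∉ (greedyTJ n I₀ (k - 1)).2 ∧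
      i + δ k ∉ (greedyTJ n I₀ (k - 1)).1 := by
  simp [greedyJ, and_assoc]

theorem greedyTJ_snd_eq (k : ℕ) : (greedyTJ n I₀ k).2 = (Icc 1 k).biUnion (greedyJ n I₀) := by
  induction k with
  | zero => rfl
  | succ k ih =>
    rw [greedyTJ_succ, ih, ← insert_Icc_right_eq_Icc_add_one (by omega), biUnion_insert]
    exact union_comm _ _

theorem greedyTJ_fst_eq (k : ℕ) :
    (greedyTJ n I₀ k).1 =
      I₀ ∪ (Icc 1 k).biUnion fun m => (greedyJ n I₀ m).image fun i => i + δ m := by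
  induction k with
  | zero => simp [greedyTJ]
  | succ k ih =>
    rw [greedyTJ_succ, ih, ← insert_Icc_right_eq_Icc_add_one (by omega), biUnion_insert,
      union_left_comm]
    exact union_comm _ _

theorem greedyTJ_fst_monotone : Monotone fun k => (greedyTJ n I₀ k).1 :=
  monotone_nat_of_le_succ fun _ => subset_union_left

theorem greedyTJ_snd_monotone : Monotone fun k => (greedyTJ n I₀ k).2 :=
  monotone_nat_of_le_succ fun _ => subset_union_left

theorem greedyTJ_snd_subset (k : ℕ) : (greedyTJ n I₀ k).2 ⊆ I₀ := by
  rw [greedyTJ_snd_eq]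
  exact biUnion_subset.2 fun _ _ => filter_subset _ _ |>.trans sdiff_subset

theorem greedyJ_subset_snd {k : ℕ} (hk : 1 ≤ k) : greedyJ n I₀ k ⊆ (greedyTJ n I₀ k).2 := by
  rw [greedyTJ_snd_eq]
  exact subset_biUnion_of_mem _ (mem_Icc.2 ⟨hk, le_rfl⟩)

theorem image_greedyJ_subset_fst {k : ℕ} (hk : 1 ≤ k) :
    (greedyJ n I₀ k).image (fun i => i + δ k) ⊆ (greedyTJ n I₀ k).1 := by
  rw [greedyTJ_fst_eq]
  exact subset_union_right.trans'
    (subset_biUnion_of_mem (fun m => (greedyJ n I₀ m).image fun i => i + δ m)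
      (mem_Icc.2 ⟨hk, le_rfl⟩))

theorem disjoint_greedyJ {k l : ℕ} (hk : 1 ≤ k) (hl : 1 ≤ l) (hkl : k ≠ l) :
    Disjoint (greedyJ n I₀ k) (greedyJ n I₀ l) := by
  wlog hlt : k < l
  · exact (this hl hk hkl.symm (by omega)).symm
  refine disjoint_left.2 fun i hik hil => (mem_greedyJ.1 hil).2.1 ?_
  exact greedyTJ_snd_monotone (by omega : k ≤ l - 1) (greedyJ_subset_snd hk hik)

theorem disjoint_image_greedyJ {k l : ℕ} (hk : 1 ≤ k) (hl : 1 ≤ l) (hkl : k ≠ l) :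
    Disjoint ((greedyJ n I₀ k).image fun i => i + δ k)
      ((greedyJ n I₀ l).image fun i => i + δ l) := by
  wlog hlt : k < l
  · exact (this hl hk hkl.symm (by omega)).symm
  refine disjoint_left.2 fun x hxk hxl => ?_
  obtain ⟨j, hj, rfl⟩ := mem_image.1 hxl
  exact (mem_greedyJ.1 hj).2.2
    (greedyTJ_fst_monotone (by omega : k ≤ l - 1) (image_greedyJ_subset_fst hk hxk))

theorem disjoint_index_image_greedyJ (k : ℕ) :
    Disjoint I₀ ((greedyJ n I₀ k).image fun i => i + δ k) := by
  refine disjoint_right.2 fun x hx hxI => ?_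
  obtain ⟨j, hj, rfl⟩ := mem_image.1 hx
  exact (mem_greedyJ.1 hj).2.2 (greedyTJ_fst_monotone (Nat.zero_le (k - 1)) hxI)

theorem card_greedyTJ_fst (k : ℕ) :
    #(greedyTJ n I₀ k).1 = #I₀ + #(greedyTJ n I₀ k).2 := by
  induction k with
  | zero => simp [greedyTJ]
  | succ k ih =>
    have hT : Disjoint (greedyTJ n I₀ k).1
        ((greedyJ n I₀ (k + 1)).image fun i => i + δ (k + 1)) := by
      refine disjoint_right.2 fun x hx => ?_
      obtain ⟨j, hj, rfl⟩ := mem_image.1 hx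
      exact (mem_greedyJ.1 hj).2.2
    have hP : Disjoint (greedyTJ n I₀ k).2 (greedyJ n I₀ (k + 1)) :=
      disjoint_right.2 fun _ hj => (mem_greedyJ.1 hj).2.1
    rw [greedyTJ_succ, card_union_of_disjoint hT, card_union_of_disjoint hP,
      card_image_of_injective _ (add_left_injective _), ih, add_assoc]

theorem add_mem_greedyTJ_fst_of_notMem_snd {i : ZMod (2 * n)} {k : ℕ} (hi : i ∈ I₀)
    (hk : 1 ≤ k) (hiP : i ∉ (greedyTJ n I₀ k).2) : i + δ k ∈ (greedyTJ n I₀ (k - 1)).1 := by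
  by_contra hfree
  have hiP' : i ∉ (greedyTJ n I₀ (k - 1)).2 := fun h => hiP (greedyTJ_snd_monotone (by omega) h)
  exact hiP (greedyJ_subset_snd hk (mem_greedyJ.2 ⟨hi, hiP', hfree⟩))

variable (I₀) in
/-- The point `x` is occupied because of the foot `j`: either `x = j`, or `x` is the right foot of
the annulus with left foot `j`. -/
def IsGreedyFoot (x j : ZMod (2 * n)) : Prop :=
  x = j ∨ ∃ m ≥ 1, j ∈ greedyJ n I₀ m ∧ x = j + δ m

theorem exists_isGreedyFoot {i : ZMod (2 * n)} {k : ℕ} (hi : i ∈ I₀)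
    (hiP : i ∉ (greedyTJ n I₀ n).2) (hk : k ∈ Icc 1 n) :
    ∃ j ∈ I₀.erase i, IsGreedyFoot I₀ (i + δ k) j := by
  obtain ⟨hk1, hkn⟩ := mem_Icc.1 hk
  have hocc := add_mem_greedyTJ_fst_of_notMem_snd hi hk1
    fun h => hiP (greedyTJ_snd_monotone hkn h)
  rw [greedyTJ_fst_eq] at hocc
  rcases mem_union.1 hocc with hI | hocc
  · refine ⟨_, mem_erase.2 ⟨?_, hI⟩, Or.inl rfl⟩
    rw [Ne, add_eq_left, ← Nat.cast_zero, ZMod.natCast_eq_natCast_iff_of_lt] <;> omega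
  · simp only [mem_biUnion, mem_Icc, mem_image] at hocc
    obtain ⟨m, ⟨hm1, hmk⟩, j, hj, hji⟩ := hocc
    have hjP : j ∈ (greedyTJ n I₀ n).2 :=
      greedyTJ_snd_monotone (by omega) (greedyJ_subset_snd hm1 hj)
    exact ⟨j, mem_erase.2 ⟨fun h => hiP (h ▸ hjP), greedyTJ_snd_subset n hjP⟩,
      Or.inr ⟨m, hm1, hj, hji.symm⟩⟩

theorem IsGreedyFoot.eq_of_add {i j : ZMod (2 * n)} {k k' : ℕ} (hk : k ∈ Icc 1 n)
    (hk' : k' ∈ Icc 1 n) (h : IsGreedyFoot I₀ (i + δ k) j) (h' : IsGreedyFoot I₀ (i + δ k') j) :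
    k = k' := by
  obtain ⟨hk1, hkn⟩ := mem_Icc.1 hk
  obtain ⟨hk1', hkn'⟩ := mem_Icc.1 hk'
  have hodd {m : ℕ} (hm : 1 ≤ m) : Odd (2 * m - 1) := ⟨m - 1, by omega⟩
  have hcancel (he : i + δ k = i + δ k') : k = k' := by
    rw [add_right_inj, ZMod.natCast_eq_natCast_iff_of_lt (by omega) (by omega)] at he
    omega
  rcases h with h | ⟨m, hm, hj, h⟩ <;> rcases h' with h' | ⟨m', hm', hj', h'⟩
  · exact hcancel (h.trans h'.symm)
  · rw [← h, add_assoc, add_right_inj] at h'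
    exact absurd h' (ZMod.natCast_ne_add_of_odd (hodd hk1') (hodd hk1) (hodd hm'))
  · rw [← h', add_assoc, add_right_inj] at h
    exact absurd h (ZMod.natCast_ne_add_of_odd (hodd hk1) (hodd hk1') (hodd hm))
  · obtain rfl : m = m' := by
      by_contra hne
      exact disjoint_left.1 (disjoint_greedyJ hm hm' hne) hj hj'
    exact hcancel (h.trans h'.symm)

theorem greedyTJ_snd_eq_self (hI : #I₀ = n) : (greedyTJ n I₀ n).2 = I₀ := by
  refine (greedyTJ_snd_subset n).antisymm fun i hi => ?_
  by_contra hiP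
  have hcard : #(Icc 1 n) ≤ #(I₀.erase i) :=
    card_le_card_of_forall_subsingleton (fun k j => IsGreedyFoot I₀ (i + δ k) j)
      (fun k hk => exists_isGreedyFoot hi hiP hk)
      (fun _ _ _ hk _ hk' => hk.2.eq_of_add hk.1 hk'.1 hk'.2)
  have hlt := card_erase_lt_of_mem hi
  rw [Nat.card_Icc] at hcard
  rw [hI] at hlt
  omega

end Greedy

theorem greedy_construction_correct_general (n : ℕ) [NeZero (2 * n)]
    (I₀ : Finset (ZMod (2 * n))) (hI : I₀.card = n) :
    (∀ k ∈ Finset.Icc 1 n, ∀ l ∈ Finset.Icc 1 n, k ≠ l →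
        Disjoint (greedyJ n I₀ k) (greedyJ n I₀ l)) ∧
    (Finset.Icc 1 n).biUnion (greedyJ n I₀) = I₀ ∧
    (∀ k ∈ Finset.Icc 1 n, ∀ l ∈ Finset.Icc 1 n, k ≠ l →
        Disjoint
          ((greedyJ n I₀ k).image fun i => i + ((2 * k - 1 : ℕ) : ZMod (2 * n)))
          ((greedyJ n I₀ l).image fun i => i + ((2 * l - 1 : ℕ) : ZMod (2 * n)))) ∧
    (Finset.Icc 1 n).biUnion
        (fun k => (greedyJ n I₀ k).image fun i =>
          i + ((2 * k - 1 : ℕ) : ZMod (2 * n))) =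
      Finset.univ \ I₀ := by
  have hP := greedyTJ_snd_eq_self hI
  have hT : (greedyTJ n I₀ n).1 = univ :=
    eq_univ_of_card _ (by rw [card_greedyTJ_fst, hP, hI, ZMod.card]; ring)
  refine ⟨fun k hk l hl => disjoint_greedyJ (mem_Icc.1 hk).1 (mem_Icc.1 hl).1,
    by rw [← greedyTJ_snd_eq, hP],
    fun k hk l hl => disjoint_image_greedyJ (mem_Icc.1 hk).1 (mem_Icc.1 hl).1, ?_⟩
  rw [← hT, greedyTJ_fst_eq, union_sdiff_cancel_left
    ((disjoint_biUnion_right _ _ _).2 fun k _ => disjoint_index_image_greedyJ k)]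

/-- Correctness of the greedy shortest-annulus-first construction:
the sets `J₁, …, J_n` are pairwise disjoint with union `I₀`, and the map
`φ : I₀ → ℤ/2n` given by `φ i = i + (2k-1)` for `i ∈ J_k` is injective with image
exactly the complement `(ℤ/2n) \ I₀`; the latter is expressed by saying that the
translates `J_k + (2k-1)` are pairwise disjoint with union `(ℤ/2n) \ I₀`. -/
theorem greedy_construction_correct (n : ℕ) (hn : 1 ≤ n) [NeZero (2 * n)]
    (I₀ : Finset (ZMod (2 * n))) (hI : I₀.card = n) :
    (∀ k ∈ Finset.Icc 1 n, ∀ l ∈ Finset.Icc 1 n, k ≠ l →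
        Disjoint (greedyJ n I₀ k) (greedyJ n I₀ l)) ∧
    (Finset.Icc 1 n).biUnion (greedyJ n I₀) = I₀ ∧
    (∀ k ∈ Finset.Icc 1 n, ∀ l ∈ Finset.Icc 1 n, k ≠ l →
        Disjoint
          ((greedyJ n I₀ k).image fun i => i + ((2 * k - 1 : ℕ) : ZMod (2 * n)))
          ((greedyJ n I₀ l).image fun i => i + ((2 * l - 1 : ℕ) : ZMod (2 * n)))) ∧
    (Finset.Icc 1 n).biUnion
        (fun k => (greedyJ n I₀ k).image fun i =>
          i + ((2 * k - 1 : ℕ) : ZMod (2 * n))) =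
      Finset.univ \ I₀ :=
  greedy_construction_correct_general n I₀ hI
end
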